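/- arXiv:0901.4408 — 2 statements merged into one kernel-verified Lean document; each statement's English description precedes it below -/
import Mathlib

section
/- Let k be a field of characteristic p > 2, G = ℤ/nℤ with generator g and p | n, and let H = T(V) # kG be the smash product Hopf algebra where V has basis a, b with a·g = a, b·g = a + b, Δ(g) = g⊗g, Δ(a) = a⊗1 + g⊗a, Δ(b) = b⊗1 + g⊗b. Then the element ba - ab - (1/2)a² is (g²,1)-skew-primitive: Δ(ba - ab - (1/2)a²) = (ba - ab - (1/2)a²)⊗1 + g²⊗(ba - ab - (1/2)a²). -/
noncomputable section

open TensorProduct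

variable (k : Type*) [Field k]

def gF : FreeAlgebra k (Fin 3) := FreeAlgebra.ι k 0

def aF : FreeAlgebra k (Fin 3) := FreeAlgebra.ι k 1

def bF : FreeAlgebra k (Fin 3) := FreeAlgebra.ι k 2

/-- Relations of the smash product `T(V) # kG`, where `V = span(a,b)` with
`a·g = a`, `b·g = a + b`: namely `g^n = 1`, `ag = ga`, `bg = ga + gb`. -/
def relH (n : ℕ) : FreeAlgebra k (Fin 3) → FreeAlgebra k (Fin 3) → Prop :=
  fun x y =>
    (x = (gF k) ^ n ∧ y = 1) ∨
    (x = aF k * gF k ∧ y = gF k * aF k) ∨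
    (x = bF k * gF k ∧ y = gF k * aF k + gF k * bF k)

/-- The smash product algebra `H₀ = T(V) # kG`. -/
abbrev H (n : ℕ) := RingQuot (relH k n)

def gH (n : ℕ) : H k n := RingQuot.mkAlgHom k (relH k n) (gF k)

def aH (n : ℕ) : H k n := RingQuot.mkAlgHom k (relH k n) (aF k)

def bH (n : ℕ) : H k n := RingQuot.mkAlgHom k (relH k n) (bF k)

/-! In `H ⊗ H`, the relations `ag = ga` and `bg - gb = ga` give
`Δb Δa - Δa Δb = (ba - ab) ⊗ 1 + ga ⊗ a + g² ⊗ (ba - ab)` and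
`(Δa)² = a² ⊗ 1 + 2 ga ⊗ a + g² ⊗ a²`, so the cross terms `ga ⊗ a` cancel in
`ba - ab - a²/2`. -/

section SkewPrimitive

variable {R A B : Type*} [CommSemiring R] [Semiring A] [Algebra R A] [Semiring B] [Algebra R B]

theorem tmul_one_add_tmul_mul_tmul_one_add_tmul (g x y : A) (x' y' : B) :
    (x ⊗ₜ[R] (1 : B) + g ⊗ₜ x') * (y ⊗ₜ 1 + g ⊗ₜ y') =
      (x * y) ⊗ₜ 1 + (x * g) ⊗ₜ y' + (g * y) ⊗ₜ x' + (g ^ 2) ⊗ₜ (x' * y') := by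
  simp only [add_mul, mul_add, Algebra.TensorProduct.tmul_mul_tmul, one_mul, mul_one, sq]
  abel

theorem tmul_one_add_tmul_sq_of_commute {g x : A} (hxg : Commute x g) :
    (x ⊗ₜ[R] (1 : A) + g ⊗ₜ x) ^ 2 = (x ^ 2) ⊗ₜ 1 + 2 • (g * x) ⊗ₜ x + (g ^ 2) ⊗ₜ (x ^ 2) := by
  rw [sq, tmul_one_add_tmul_mul_tmul_one_add_tmul, hxg.eq, two_nsmul, ← sq]
  abel

end SkewPrimitive

theorem map_commutator_sub_half_sq_of_skewPrimitive
    {R A : Type*} [CommRing R] [Invertible (2 : R)] [Ring A] [Algebra R A]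
    (Δ : A →ₐ[R] (A ⊗[R] A)) {g a b : A} (hag : a * g = g * a) (hbg : b * g = g * a + g * b)
    (ha : Δ a = a ⊗ₜ 1 + g ⊗ₜ a) (hb : Δ b = b ⊗ₜ 1 + g ⊗ₜ b) :
    Δ (b * a - a * b - ⅟(2 : R) • a ^ 2) =
      (b * a - a * b - ⅟(2 : R) • a ^ 2) ⊗ₜ 1 + (g ^ 2) ⊗ₜ (b * a - a * b - ⅟(2 : R) • a ^ 2) := by
  have hsq : ⅟(2 : R) • Δ (a ^ 2) =
      ⅟(2 : R) • (a ^ 2) ⊗ₜ 1 + (g * a) ⊗ₜ a + ⅟(2 : R) • (g ^ 2) ⊗ₜ (a ^ 2) := by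
    rw [map_pow, ha, tmul_one_add_tmul_sq_of_commute hag, smul_add, smul_add,
      ← Nat.cast_smul_eq_nsmul R, smul_smul, Nat.cast_ofNat, invOf_mul_self, one_smul]
  rw [map_sub, map_sub, map_smul, hsq, map_mul, map_mul, ha, hb,
    tmul_one_add_tmul_mul_tmul_one_add_tmul, tmul_one_add_tmul_mul_tmul_one_add_tmul, hag, hbg]
  simp only [sub_tmul, tmul_sub, ← smul_tmul', tmul_smul, add_tmul]
  abel

theorem aH_mul_gH (n : ℕ) : aH k n * gH k n = gH k n * aH k n := by
  simp only [aH, gH, ← map_mul]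
  exact RingQuot.mkAlgHom_rel k (Or.inr (Or.inl ⟨rfl, rfl⟩))

theorem bH_mul_gH (n : ℕ) : bH k n * gH k n = gH k n * aH k n + gH k n * bH k n := by
  simp only [aH, bH, gH, ← map_mul, ← map_add]
  exact RingQuot.mkAlgHom_rel k (Or.inr (Or.inr ⟨rfl, rfl⟩))

theorem quadratic_skew_primitive (p n : ℕ) (hp : 2 < p) [CharP k p]
    (Δ : H k n →ₐ[k] H k n ⊗[k] H k n)
    (ha : Δ (aH k n) = aH k n ⊗ₜ 1 + gH k n ⊗ₜ aH k n)
    (hb : Δ (bH k n) = bH k n ⊗ₜ 1 + gH k n ⊗ₜ bH k n) :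
    Δ (bH k n * aH k n - aH k n * bH k n - ((2 : k)⁻¹) • (aH k n) ^ 2) =
      (bH k n * aH k n - aH k n * bH k n - ((2 : k)⁻¹) • (aH k n) ^ 2) ⊗ₜ 1 +
      ((gH k n) ^ 2) ⊗ₜ (bH k n * aH k n - aH k n * bH k n - ((2 : k)⁻¹) • (aH k n) ^ 2) := by
  have h2 : (2 : k) ≠ 0 := Ring.two_ne_zero (by rw [ringChar.eq k p]; omega)
  let _ := invertibleOfNonzero h2
  rw [← invOf_eq_inv]
  exact map_commutator_sub_half_sq_of_skewPrimitive Δ (aH_mul_gH k n) (bH_mul_gH k n) ha hb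
end
end

section
/- Let k be a field of characteristic 2 and H = T(V) # kG as above. Then in H, Δ(b²) = b²⊗1 + ga⊗b + g²⊗b², and consequently Δ(b⁴) = b⁴⊗1 + g(a³ + ba² + aba + b²a + ab²)⊗b + g²a²⊗b² + g⁴⊗b⁴. -/
noncomputable section

open TensorProduct

variable (k : Type*) [Field k]

theorem comul_b_sq_and_b_four (n : ℕ) [CharP k 2]
    (hn : 0 < n) (h2n : 2 ∣ n)
    (Δ : H k n →ₐ[k] H k n ⊗[k] H k n)
    (hg : Δ (gH k n) = gH k n ⊗ₜ gH k n)
    (ha : Δ (aH k n) = aH k n ⊗ₜ 1 + gH k n ⊗ₜ aH k n)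
    (hb : Δ (bH k n) = bH k n ⊗ₜ 1 + gH k n ⊗ₜ bH k n) :
    Δ ((bH k n) ^ 2) =
      ((bH k n) ^ 2) ⊗ₜ 1 + (gH k n * aH k n) ⊗ₜ (bH k n) +
        ((gH k n) ^ 2) ⊗ₜ ((bH k n) ^ 2) ∧
    Δ ((bH k n) ^ 4) =
      ((bH k n) ^ 4) ⊗ₜ 1 +
      (gH k n * ((aH k n) ^ 3 + bH k n * (aH k n) ^ 2 + aH k n * bH k n * aH k n +
        (bH k n) ^ 2 * aH k n + aH k n * (bH k n) ^ 2)) ⊗ₜ (bH k n) +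
      ((gH k n) ^ 2 * (aH k n) ^ 2) ⊗ₜ ((bH k n) ^ 2) +
      ((gH k n) ^ 4) ⊗ₜ ((bH k n) ^ 4) := by
  have hag : aH k n * gH k n = gH k n * aH k n := by
    have := RingQuot.mkAlgHom_rel k
      (show relH k n (aF k * gF k) (gF k * aF k) from Or.inr (Or.inl ⟨rfl, rfl⟩))
    simpa [map_mul, gH, aH] using this
  have hbg : bH k n * gH k n = gH k n * aH k n + gH k n * bH k n := by
    have := RingQuot.mkAlgHom_rel k
      (show relH k n (bF k * gF k) (gF k * aF k + gF k * bF k) from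
        Or.inr (Or.inr ⟨rfl, rfl⟩))
    simpa [map_mul, map_add, gH, aH, bH] using this
  have h2 : ∀ x : H k n ⊗[k] H k n, x + x = 0 := fun x => by
    rw [← two_smul k x, show (2:k) = 0 from CharTwo.two_eq_zero, zero_smul]
  have hag' : ∀ x : H k n, aH k n * (gH k n * x) = gH k n * (aH k n * x) := fun x => by
    rw [← mul_assoc, hag, mul_assoc]
  have hbg' : ∀ x : H k n,
      bH k n * (gH k n * x) = gH k n * (aH k n * x) + gH k n * (bH k n * x) := fun x => by
    rw [← mul_assoc, hbg, add_mul, mul_assoc, mul_assoc]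
  have key1 : Δ ((bH k n) ^ 2) =
      ((bH k n) ^ 2) ⊗ₜ 1 + (gH k n * aH k n) ⊗ₜ (bH k n) +
        ((gH k n) ^ 2) ⊗ₜ ((bH k n) ^ 2) := by
    rw [map_pow, hb]
    simp only [pow_succ, pow_zero, one_mul, mul_add, add_mul, mul_assoc, hag, hbg, hag', hbg',
      Algebra.TensorProduct.tmul_mul_tmul, add_tmul, tmul_add, mul_one]
    rw [← sub_eq_zero]
    abel_nf
    simp only [show (4:ℤ) = 2+2 from rfl, add_zsmul, two_zsmul, h2, add_zero, zero_add]
  refine ⟨key1, ?_⟩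
  have h4 : Δ ((bH k n) ^ 4) = (Δ ((bH k n) ^ 2)) ^ 2 := by
    rw [← map_pow, ← pow_mul]
  rw [h4, key1]
  simp only [pow_succ, pow_zero, one_mul, mul_add, add_mul, mul_assoc, hag, hbg, hag', hbg',
    Algebra.TensorProduct.tmul_mul_tmul, add_tmul, tmul_add, mul_one]
  rw [← sub_eq_zero]
  abel_nf
  simp only [show (4:ℤ) = 2+2 from rfl, add_zsmul, two_zsmul, h2, add_zero, zero_add]
end
end
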